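/- arXiv:1412.3239 — 8 statements merged into one kernel-verified Lean document; each statement's English description precedes it below -/
import Mathlib

section
/- The decoherence-free subalgebra N(T) = {x ∈ B(H) : T_t(x*x) = T_t(x)*T_t(x) and T_t(xx*) = T_t(x)T_t(x)* for all t ≥ 0} of a quantum Markov semigroup is a von Neumann subalgebra of B(H): it is a *-subalgebra containing the identity and closed in the σ-strong topology, and it is invariant under every T_t. -/
open Filter

/-- Complete positivity of a linear map on `B(H)`. -/
def IsCompletelyPositive {H : Type} [NormedAddCommGroup H] [InnerProductSpace ℂ H]
    [CompleteSpace H] (T : (H →L[ℂ] H) →ₗ[ℂ] (H →L[ℂ] H)) : Prop :=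
  ∀ (n : ℕ) (a b : Fin n → (H →L[ℂ] H)),
    (∑ i, ∑ j, star (b i) * T (star (a i) * a j) * b j).IsPositive

/-- The decoherence-free subalgebra of a semigroup `T`. -/
def DFSubalgebra {H : Type} [NormedAddCommGroup H] [InnerProductSpace ℂ H]
    [CompleteSpace H] (T : ℝ → (H →L[ℂ] H) →ₗ[ℂ] (H →L[ℂ] H)) :
    Set (H →L[ℂ] H) :=
  {x | ∀ t, 0 ≤ t →
    T t (star x * x) = star (T t x) * T t x ∧
    T t (x * star x) = T t x * star (T t x)}

/-!
By the Kadison–Schwarz inequality `T(z)* T(z) ≤ T(z* z)`, a consequence of 2-positivity, the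
defect `D(a, b) = T(a* b) - T(a)* T(b)` is a positive sesquilinear form, so `D(x, x) = 0` forces
`D(x, ·) = 0`. Hence `N(T)` is the intersection over `t ≥ 0` of the multiplicative domains
`{a | T_t(a w) = T_t(a) T_t(w) ∧ T_t(w a) = T_t(w) T_t(a) ∀ w}`, each a unital *-subalgebra.
A multiplicative domain of a normal map is closed under bounded strong limits, because
`T_t(x_n w) = T_t(x_n) T_t(w)` passes to the limit on both sides. Invariance is the semigroup
law: `T_t(T_s(x)* T_s(x)) = T_{t+s}(x* x)`.
-/

open ComplexConjugate Topology

section MultiplicativeDomain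

variable {R A B : Type*} [CommSemiring R] [StarRing R] [Semiring A] [StarRing A] [Algebra R A]
  [StarModule R A] [Semiring B] [StarRing B] [Algebra R B]

def LinearMap.multiplicativeDomain (S : A →ₗ[R] B) (h1 : S 1 = 1)
    (hstar : ∀ a, S (star a) = star (S a)) : StarSubalgebra R A where
  carrier := {a | ∀ w, S (a * w) = S a * S w ∧ S (w * a) = S w * S a}
  mul_mem' {a b} ha hb w := by
    refine ⟨?_, ?_⟩
    · rw [mul_assoc, (ha _).1, (hb w).1, (ha b).1, mul_assoc]
    · rw [← mul_assoc, (hb _).2, (ha w).2, (hb a).2, mul_assoc]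
  add_mem' {a b} ha hb w := by
    simp only [add_mul, mul_add, map_add, (ha w).1, (hb w).1, (ha w).2, (hb w).2, and_self]
  algebraMap_mem' r w := by
    simp only [Algebra.algebraMap_eq_smul_one, smul_mul_assoc, mul_smul_comm, one_mul, mul_one,
      map_smul, h1, and_self]
  star_mem' {a} ha w := by
    constructor
    · simpa [← hstar, star_mul] using congrArg star (ha (star w)).2
    · simpa [← hstar, star_mul] using congrArg star (ha (star w)).1

lemma LinearMap.mem_multiplicativeDomain {S : A →ₗ[R] B} {h1 : S 1 = 1}
    {hstar : ∀ a, S (star a) = star (S a)} {a : A} :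
    a ∈ S.multiplicativeDomain h1 hstar ↔ ∀ w, S (a * w) = S a * S w ∧ S (w * a) = S w * S a :=
  Iff.rfl

end MultiplicativeDomain

lemma Complex.eq_zero_of_forall_re_mul_add_normSq_mul_nonneg {d : ℂ} {e : ℝ}
    (h : ∀ c : ℂ, 0 ≤ 2 * (c * d).re + normSq c * e) : d = 0 := by
  by_contra hd
  set t : ℝ := 1 / (|e| + 1)
  have ht : 0 < t := by positivity
  have hte : t * e < 1 := by
    calc t * e ≤ t * |e| := mul_le_mul_of_nonneg_left (le_abs_self e) ht.le
      _ < 1 := by rw [div_mul_eq_mul_div, one_mul, div_lt_one (by positivity)]; linarith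
  have hN : 0 < normSq d := normSq_pos.2 hd
  have := h (-(t * conj d))
  simp only [neg_mul, neg_re, mul_assoc, conj_mul', ← ofReal_pow, ← normSq_eq_norm_sq,
    re_ofReal_mul, ofReal_re, normSq_neg, normSq_mul, normSq_ofReal, normSq_conj] at this
  nlinarith [mul_pos ht hN]

namespace ContinuousLinearMap

variable {H : Type} [NormedAddCommGroup H] [InnerProductSpace ℂ H] [CompleteSpace H]

lemma eq_zero_of_forall_smul_add_smul_star_add_nonneg {A E : H →L[ℂ] H}
    (h : ∀ c : ℂ, 0 ≤ c • A + conj c • star A + (Complex.normSq c : ℂ) • E) : A = 0 := by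
  suffices hA : ∀ ξ, inner ℂ (A ξ) ξ = 0 by
    ext ξ
    simpa using LinearMap.congr_fun ((inner_map_self_eq_zero (A : H →ₗ[ℂ] H)).mp hA) ξ
  intro ξ
  rw [← map_eq_zero (starRingEnd ℂ)]
  refine Complex.eq_zero_of_forall_re_mul_add_normSq_mul_nonneg (e := (inner ℂ (E ξ) ξ).re)
    fun c => ?_
  have hc := ((nonneg_iff_isPositive _).1 (h c)).re_inner_nonneg_left ξ
  simp only [add_apply, smul_apply, inner_add_left, inner_smul_left, star_eq_adjoint,
    adjoint_inner_left, Complex.add_re, Complex.conj_conj, Complex.conj_ofReal,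
    Complex.re_ofReal_mul, RCLike.re_to_complex] at hc
  rw [← inner_conj_symm ξ (A ξ)] at hc
  have : (conj c * inner ℂ (A ξ) ξ).re = (c * conj (inner ℂ (A ξ) ξ)).re := by
    rw [← Complex.conj_re, map_mul, Complex.conj_conj]
  linarith

end ContinuousLinearMap

section BoundedOperators

variable {H : Type} [NormedAddCommGroup H] [InnerProductSpace ℂ H] [CompleteSpace H]

lemma IsCompletelyPositive.star_map_mul_map_le {S : (H →L[ℂ] H) →ₗ[ℂ] (H →L[ℂ] H)}
    (hS : IsCompletelyPositive S) (h1 : S 1 = 1) (hstar : ∀ a, S (star a) = star (S a))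
    (z : H →L[ℂ] H) : star (S z) * S z ≤ S (star z * z) := by
  have h := hS 2 ![z, 1] ![1, -S z]
  simp only [Fin.sum_univ_two, Matrix.cons_val_zero, Matrix.cons_val_one,
    star_one, one_mul, mul_one, h1, hstar, star_neg, neg_mul, mul_neg, neg_neg] at h
  rw [ContinuousLinearMap.le_def]
  convert h using 1
  abel

section SchwarzMap

variable {S : (H →L[ℂ] H) →ₗ[ℂ] (H →L[ℂ] H)}

lemma map_star_mul_of_map_star_mul_self (hKS : ∀ z, star (S z) * S z ≤ S (star z * z))
    (hstar : ∀ a, S (star a) = star (S a)) {x : H →L[ℂ] H}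
    (hx : S (star x * x) = star (S x) * S x) (y : H →L[ℂ] H) :
    S (star x * y) = star (S x) * S y := by
  set D := fun a b => S (star a * b) - star (S a) * S b
  have hD_star : star (D x y) = D y x := by
    simp only [D, star_sub, star_mul, star_star, ← hstar]
  have hD_expand : ∀ c : ℂ, D (x + c • y) (x + c • y) =
      c • D x y + conj c • star (D x y) + (Complex.normSq c : ℂ) • D y y := by
    intro c
    rw [hD_star, ← Complex.mul_conj]
    simp only [D, star_add, star_smul, Complex.star_def, add_mul, mul_add, smul_mul_assoc,
      mul_smul_comm, map_add, map_smul, hx]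
    module
  have hD : D x y = 0 := ContinuousLinearMap.eq_zero_of_forall_smul_add_smul_star_add_nonneg
    fun c => by rw [← hD_expand]; exact sub_nonneg.2 (hKS _)
  exact sub_eq_zero.1 hD

lemma mem_multiplicativeDomain_iff_of_schwarz (hKS : ∀ z, star (S z) * S z ≤ S (star z * z))
    (hstar : ∀ a, S (star a) = star (S a)) (h1 : S 1 = 1) {x : H →L[ℂ] H} :
    x ∈ S.multiplicativeDomain h1 hstar ↔
      S (star x * x) = star (S x) * S x ∧ S (x * star x) = S x * star (S x) := by
  constructor
  · intro hx
    simpa only [hstar] using LinearMap.mem_multiplicativeDomain.1 (star_mem hx) x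
  · rintro ⟨hl, hr⟩ w
    have hr' : S (star (star x) * star x) = star (S (star x)) * S (star x) := by
      simpa [hstar] using hr
    constructor
    · simpa [hstar] using map_star_mul_of_map_star_mul_self hKS hstar hr' w
    · simpa [← hstar, star_mul] using
        congrArg star (map_star_mul_of_map_star_mul_self hKS hstar hl (star w))

end SchwarzMap

lemma LinearMap.mem_multiplicativeDomain_of_tendsto {S : (H →L[ℂ] H) →ₗ[ℂ] (H →L[ℂ] H)}
    {h1 : S 1 = 1} {hstar : ∀ a, S (star a) = star (S a)}
    (hS : ∀ (x : ℕ → H →L[ℂ] H) (y : H →L[ℂ] H), (∃ C, ∀ n, ‖x n‖ ≤ C) →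
      (∀ ξ, Tendsto (fun n => x n ξ) atTop (𝓝 (y ξ))) →
      ∀ ξ, Tendsto (fun n => S (x n) ξ) atTop (𝓝 (S y ξ)))
    {x : ℕ → H →L[ℂ] H} {y : H →L[ℂ] H} (hx : ∀ n, x n ∈ S.multiplicativeDomain h1 hstar)
    (hbdd : ∃ C, ∀ n, ‖x n‖ ≤ C) (hconv : ∀ ξ, Tendsto (fun n => x n ξ) atTop (𝓝 (y ξ))) :
    y ∈ S.multiplicativeDomain h1 hstar := by
  obtain ⟨C, hC⟩ := hbdd
  have hSx := hS x y ⟨C, hC⟩ hconv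
  intro w
  constructor <;> ext ξ
  · have hbdd : ∀ n, ‖x n * w‖ ≤ C * ‖w‖ := fun n =>
      (norm_mul_le _ _).trans (mul_le_mul_of_nonneg_right (hC n) (norm_nonneg w))
    refine tendsto_nhds_unique (hS _ (y * w) ⟨_, hbdd⟩ (fun η => hconv (w η)) ξ) ?_
    simpa only [(hx _ w).1, mul_apply_eq_comp] using hSx (S w ξ)
  · have hbdd : ∀ n, ‖w * x n‖ ≤ ‖w‖ * C := fun n =>
      (norm_mul_le _ _).trans (mul_le_mul_of_nonneg_left (hC n) (norm_nonneg w))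
    refine tendsto_nhds_unique
      (hS _ (w * y) ⟨_, hbdd⟩ (fun η => (w.continuous.tendsto _).comp (hconv η)) ξ) ?_
    simpa only [(hx _ w).2, mul_apply_eq_comp, Function.comp_def] using
      ((S w).continuous.tendsto _).comp (hSx ξ)

section DFSubalgebra

variable {T : ℝ → (H →L[ℂ] H) →ₗ[ℂ] (H →L[ℂ] H)}

lemma map_mem_dfSubalgebra (hsemi : ∀ t s, 0 ≤ t → 0 ≤ s → ∀ x, T (t + s) x = T t (T s x))
    {s : ℝ} (hs : 0 ≤ s) {x : H →L[ℂ] H} (hx : x ∈ DFSubalgebra T) : T s x ∈ DFSubalgebra T := by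
  intro t ht
  simp only [← (hx s hs).1, ← (hx s hs).2, ← hsemi t s ht hs]
  exact hx (t + s) (add_nonneg ht hs)

lemma dfSubalgebra_eq_iInf_multiplicativeDomain
    (hKS : ∀ t, 0 ≤ t → ∀ z, star (T t z) * T t z ≤ T t (star z * z))
    (hunital : ∀ t, 0 ≤ t → T t 1 = 1) (hreal : ∀ t, 0 ≤ t → ∀ a, T t (star a) = star (T t a)) :
    DFSubalgebra T =
      ↑(⨅ (t) (ht : 0 ≤ t), (T t).multiplicativeDomain (hunital t ht) (hreal t ht)) := by
  ext x
  simp only [SetLike.mem_coe, StarSubalgebra.mem_iInf]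
  exact forall₂_congr fun t ht =>
    (mem_multiplicativeDomain_iff_of_schwarz (hKS t ht) (hreal t ht) (hunital t ht)).symm

end DFSubalgebra

end BoundedOperators

theorem df_subalgebra_is_vonNeumann_general
    {H : Type} [NormedAddCommGroup H] [InnerProductSpace ℂ H] [CompleteSpace H]
    (T : ℝ → (H →L[ℂ] H) →ₗ[ℂ] (H →L[ℂ] H))
    (hCP : ∀ t, 0 ≤ t → IsCompletelyPositive (T t))
    (hunital : ∀ t, 0 ≤ t → T t 1 = 1)
    (hreal : ∀ t, 0 ≤ t → ∀ a, T t (star a) = star (T t a))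
    (hsemi : ∀ t s, 0 ≤ t → 0 ≤ s → ∀ x, T (t + s) x = T t (T s x))
    -- normality of each `T_t`, expressed as σ-strong (= strong on bounded sets)
    -- sequential continuity
    (hnormal : ∀ t, 0 ≤ t → ∀ (x : ℕ → H →L[ℂ] H) (y : H →L[ℂ] H),
      (∃ C, ∀ n, ‖x n‖ ≤ C) →
      (∀ ξ : H, Tendsto (fun n => x n ξ) atTop (nhds (y ξ))) →
      ∀ ξ : H, Tendsto (fun n => T t (x n) ξ) atTop (nhds (T t y ξ))) :
    (1 : H →L[ℂ] H) ∈ DFSubalgebra T ∧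
    (∀ x ∈ DFSubalgebra T, ∀ y ∈ DFSubalgebra T, x + y ∈ DFSubalgebra T) ∧
    (∀ x ∈ DFSubalgebra T, ∀ c : ℂ, c • x ∈ DFSubalgebra T) ∧
    (∀ x ∈ DFSubalgebra T, ∀ y ∈ DFSubalgebra T, x * y ∈ DFSubalgebra T) ∧
    (∀ x ∈ DFSubalgebra T, star x ∈ DFSubalgebra T) ∧
    (∀ t, 0 ≤ t → ∀ x ∈ DFSubalgebra T, T t x ∈ DFSubalgebra T) ∧
    (∀ (x : ℕ → H →L[ℂ] H) (y : H →L[ℂ] H),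
      (∀ n, x n ∈ DFSubalgebra T) →
      (∃ C, ∀ n, ‖x n‖ ≤ C) →
      (∀ ξ : H, Tendsto (fun n => x n ξ) atTop (nhds (y ξ))) →
      y ∈ DFSubalgebra T) := by
  have hN := dfSubalgebra_eq_iInf_multiplicativeDomain
    (fun t ht => (hCP t ht).star_map_mul_map_le (hunital t ht) (hreal t ht)) hunital hreal
  refine ⟨?_, ?_, ?_, ?_, ?_, fun t ht x hx => map_mem_dfSubalgebra hsemi ht hx, ?_⟩ <;>
    simp only [hN, SetLike.mem_coe]
  · exact one_mem _
  · exact fun x hx y hy => add_mem hx hy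
  · exact fun x hx c => SMulMemClass.smul_mem c hx
  · exact fun x hx y hy => mul_mem hx hy
  · exact fun x hx => star_mem hx
  · intro x y hx hbdd hconv
    simp only [StarSubalgebra.mem_iInf] at hx ⊢
    exact fun t ht => LinearMap.mem_multiplicativeDomain_of_tendsto (hnormal t ht)
      (fun n => hx n t ht) hbdd hconv

/-- the decoherence-free subalgebra `N(T)` of a quantum Markov
semigroup is a von Neumann subalgebra of `B(H)`: a *-subalgebra containing the
identity, closed under (bounded, strong) σ-strong limits, and invariant under
every `T_t`. -/
theorem df_subalgebra_is_vonNeumann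
    {H : Type} [NormedAddCommGroup H] [InnerProductSpace ℂ H] [CompleteSpace H]
    (T : ℝ → (H →L[ℂ] H) →ₗ[ℂ] (H →L[ℂ] H))
    (hCP : ∀ t, 0 ≤ t → IsCompletelyPositive (T t))
    (hunital : ∀ t, 0 ≤ t → T t 1 = 1)
    (hreal : ∀ t, 0 ≤ t → ∀ a, T t (star a) = star (T t a))
    (hzero : T 0 = LinearMap.id)
    (hsemi : ∀ t s, 0 ≤ t → 0 ≤ s → ∀ x, T (t + s) x = T t (T s x))
    -- normality of each `T_t`, expressed as σ-strong (= strong on bounded sets)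
    -- sequential continuity
    (hnormal : ∀ t, 0 ≤ t → ∀ (x : ℕ → H →L[ℂ] H) (y : H →L[ℂ] H),
      (∃ C, ∀ n, ‖x n‖ ≤ C) →
      (∀ ξ : H, Tendsto (fun n => x n ξ) atTop (nhds (y ξ))) →
      ∀ ξ : H, Tendsto (fun n => T t (x n) ξ) atTop (nhds (T t y ξ))) :
    (1 : H →L[ℂ] H) ∈ DFSubalgebra T ∧
    (∀ x ∈ DFSubalgebra T, ∀ y ∈ DFSubalgebra T, x + y ∈ DFSubalgebra T) ∧
    (∀ x ∈ DFSubalgebra T, ∀ c : ℂ, c • x ∈ DFSubalgebra T) ∧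
    (∀ x ∈ DFSubalgebra T, ∀ y ∈ DFSubalgebra T, x * y ∈ DFSubalgebra T) ∧
    (∀ x ∈ DFSubalgebra T, star x ∈ DFSubalgebra T) ∧
    (∀ t, 0 ≤ t → ∀ x ∈ DFSubalgebra T, T t x ∈ DFSubalgebra T) ∧
    (∀ (x : ℕ → H →L[ℂ] H) (y : H →L[ℂ] H),
      (∀ n, x n ∈ DFSubalgebra T) →
      (∃ C, ∀ n, ‖x n‖ ≤ C) →
      (∀ ξ : H, Tendsto (fun n => x n ξ) atTop (nhds (y ξ))) →
      y ∈ DFSubalgebra T) :=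
  df_subalgebra_is_vonNeumann_general T hCP hunital hreal hsemi hnormal
end

section
/- Let L be a GKSL generator with operators H, (L_ℓ) and suppose x ∈ B(H) commutes with every iterated commutator δ_H^n(L_ℓ) and δ_H^n(L_ℓ*), n ≥ 0, ℓ ≥ 1 (where δ_H^0(X) = X, δ_H^{n+1}(X) = [H, δ_H^n(X)]). Then L^n(x) = i^n δ_H^n(x) for all n ≥ 0, and hence e^{tL}(x) = e^{itH} x e^{−itH} for all t ≥ 0. -/
/-!
By the Jacobi identity, if `x` commutes with every `δ_H^m(l)` then so does every `δ_H^n(x)`.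
Each `δ_H^n(x)` therefore commutes with `L_ℓ` and `L_ℓ*`, the dissipative part of `𝓛` kills it,
and `𝓛(δ_H^n x) = i δ_H^{n+1} x`. Consequently `t • 𝓛` and `ad(itH)` have the same powers on `x`,
so their exponentials agree at `x`; and `exp(ad(itH))` is conjugation by `exp(itH)`, because
`ad` is left minus right multiplication, two commuting operators.
-/

/-- Iterated commutators `δ_H^n(x)`: `δ_H^0(x) = x`, `δ_H^{n+1}(x) = [H, δ_H^n(x)]`. -/
def iterComm {A : Type} [Ring A] (h x : A) : ℕ → A
  | 0 => x
  | n + 1 => h * iterComm h x n - iterComm h x n * h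

open NormedSpace ContinuousLinearMap

theorem commute_iterComm_iterComm {A : Type} [Ring A] {h l x : A}
    (hx : ∀ m, Commute x (iterComm h l m)) (n m : ℕ) :
    Commute (iterComm h x n) (iterComm h l m) := by
  induction n generalizing m with
  | zero => exact hx m
  | succ n ih =>
    have jacobi : ∀ a b : A, (h * a - a * h) * b - b * (h * a - a * h) =
        (h * (a * b - b * a) - (a * b - b * a) * h) -
          (a * (h * b - b * h) - (h * b - b * h) * a) :=
      fun a b => by noncomm_ring
    rw [Commute, SemiconjBy, ← sub_eq_zero, iterComm, jacobi, (ih m).eq, ← iterComm,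
      (ih (m + 1)).eq]
    simp

theorem dissipator_eq_zero_of_commute {R : Type*} [Ring R] {a b y : R}
    (ha : Commute y a) (hb : Commute y b) :
    b * a * y - 2 * (b * y * a) + y * (b * a) = 0 := by
  have hl : b * a * y = b * y * a := by rw [mul_assoc, ← ha.eq, mul_assoc]
  have hr : y * (b * a) = b * y * a := by rw [← mul_assoc, hb.eq]
  rw [hl, hr, two_mul]
  noncomm_ring

namespace ContinuousLinearMap

theorem pow_apply_eq_pow_smul {R M : Type*} [Semiring R] [TopologicalSpace M]
    [AddCommMonoid M] [Module R M] {T : M →L[R] M} {c : R} {f : ℕ → M}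
    (hf : ∀ n, T (f n) = c • f (n + 1)) (n : ℕ) : (T ^ n) (f 0) = c ^ n • f n := by
  induction n with
  | zero => simp
  | succ n ih => rw [pow_succ', mul_apply_eq_comp, ih, map_smul, hf, smul_smul, pow_succ]

section ExpApply

variable {𝕜 E : Type*} [RCLike 𝕜] [NormedAddCommGroup E] [NormedSpace 𝕜 E] [CompleteSpace E]

theorem exp_apply_eq_tsum (T : E →L[𝕜] E) (x : E) :
    exp T x = ∑' n, (n.factorial⁻¹ : 𝕜) • (T ^ n) x := by
  rw [exp_eq_tsum 𝕜, ← apply_apply (𝕜 := 𝕜) x,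
    ContinuousLinearMap.map_tsum _ (expSeries_summable' T)]
  simp

theorem exp_apply_eq_of_pow_apply_eq {S T : E →L[𝕜] E} {x : E}
    (h : ∀ n, (S ^ n) x = (T ^ n) x) : exp S x = exp T x := by
  simp only [exp_apply_eq_tsum, h]

end ExpApply

section Ad

variable {𝕜 A : Type*} [RCLike 𝕜] [NormedRing A] [NormedAlgebra 𝕜 A]

variable (𝕜) in
noncomputable def ad (h : A) : A →L[𝕜] A := mul 𝕜 A h - (mul 𝕜 A).flip h

@[simp] theorem ad_apply (h y : A) : ad 𝕜 h y = h * y - y * h := rfl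

variable (𝕜 A) in
noncomputable def mulLeftRingHom : A →+* (A →L[𝕜] A) where
  toFun := mul 𝕜 A
  map_one' := by ext; simp
  map_mul' a b := by ext; simp [mul_assoc]
  map_zero' := by simp
  map_add' := by simp

variable (𝕜 A) in
noncomputable def mulRightRingHom : Aᵐᵒᵖ →+* (A →L[𝕜] A) where
  toFun a := (mul 𝕜 A).flip a.unop
  map_one' := by ext; simp
  map_mul' a b := by ext; simp [mul_assoc]
  map_zero' := by simp
  map_add' := by simp

variable [CompleteSpace A]

theorem exp_mul_apply (a y : A) : exp (mul 𝕜 A a) y = exp a * y := by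
  have h := map_exp_of_mem_ball (𝕂 := 𝕜) (mulLeftRingHom 𝕜 A) (mul 𝕜 A).continuous a
    (by simp [expSeries_radius_eq_top])
  exact (DFunLike.congr_fun h y).symm

theorem exp_flip_mul_apply (a y : A) : exp ((mul 𝕜 A).flip a) y = y * exp a := by
  have h := map_exp_of_mem_ball (𝕂 := 𝕜) (mulRightRingHom 𝕜 A)
    ((mul 𝕜 A).flip.continuous.comp MulOpposite.continuous_unop) (MulOpposite.op a)
    (by simp [expSeries_radius_eq_top])
  simpa [mulRightRingHom] using (DFunLike.congr_fun h y).symm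

theorem exp_ad_apply (h y : A) : exp (ad 𝕜 h) y = exp h * y * exp (-h) := by
  have hsplit : ad 𝕜 h = mul 𝕜 A h + (mul 𝕜 A).flip (-h) := by ext; simp [sub_eq_add_neg]
  have hcomm : Commute (mul 𝕜 A h) ((mul 𝕜 A).flip (-h)) := by ext; simp [mul_assoc]
  rw [hsplit, exp_add_of_commute_of_mem_ball (𝕂 := 𝕜) hcomm (by simp [expSeries_radius_eq_top])
    (by simp [expSeries_radius_eq_top]), mul_apply_eq_comp, exp_flip_mul_apply, exp_mul_apply,
    mul_assoc]

end Ad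

end ContinuousLinearMap

theorem commutes_with_iterated_commutators_implies_unitary_evolution_general
    {Hs : Type} [NormedAddCommGroup Hs] [InnerProductSpace ℂ Hs] [CompleteSpace Hs]
    (N : ℕ) (H : Hs →L[ℂ] Hs)
    (L : Fin N → (Hs →L[ℂ] Hs))
    (𝓛 : (Hs →L[ℂ] Hs) →L[ℂ] (Hs →L[ℂ] Hs))
    (h𝓛 : ∀ y, 𝓛 y = Complex.I • (H * y - y * H) -
      (1/2 : ℂ) • ∑ ℓ, (star (L ℓ) * L ℓ * y - 2 * (star (L ℓ) * y * L ℓ) +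
        y * (star (L ℓ) * L ℓ)))
    (x : Hs →L[ℂ] Hs)
    (hcomm : ∀ (n : ℕ) (ℓ : Fin N),
      Commute x (iterComm H (L ℓ) n) ∧ Commute x (iterComm H (star (L ℓ)) n)) :
    (∀ n : ℕ, (𝓛 ^ n) x = Complex.I ^ n • iterComm H x n) ∧
    (∀ t : ℝ, 0 ≤ t →
      NormedSpace.exp (t • 𝓛) x =
        NormedSpace.exp ((Complex.I * t) • H) * x *
          NormedSpace.exp ((-(Complex.I * t)) • H)) := by
  have hstep (n : ℕ) : 𝓛 (iterComm H x n) = Complex.I • iterComm H x (n + 1) := by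
    have hdiss : ∀ ℓ, star (L ℓ) * L ℓ * iterComm H x n -
        2 * (star (L ℓ) * iterComm H x n * L ℓ) + iterComm H x n * (star (L ℓ) * L ℓ) = 0 :=
      fun ℓ => dissipator_eq_zero_of_commute
        (commute_iterComm_iterComm (fun m => (hcomm m ℓ).1) n 0)
        (commute_iterComm_iterComm (fun m => (hcomm m ℓ).2) n 0)
    rw [h𝓛, Finset.sum_eq_zero fun ℓ _ => hdiss ℓ, smul_zero, sub_zero]
    rfl
  refine ⟨pow_apply_eq_pow_smul hstep, fun t _ => ?_⟩
  have hscaled (n : ℕ) : (t • 𝓛) (iterComm H x n) = (Complex.I * t) • iterComm H x (n + 1) := by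
    rw [smul_apply, hstep, ← Complex.coe_smul, smul_smul, mul_comm]
  have hdrift (n : ℕ) :
      ad ℂ ((Complex.I * t) • H) (iterComm H x n) = (Complex.I * t) • iterComm H x (n + 1) := by
    rw [ad_apply, smul_mul_assoc, mul_smul_comm, ← smul_sub]
    rfl
  have hpow (n : ℕ) : ((t • 𝓛) ^ n) x = (ad ℂ ((Complex.I * t) • H) ^ n) x :=
    (pow_apply_eq_pow_smul hscaled n).trans (pow_apply_eq_pow_smul hdrift n).symm
  rw [exp_apply_eq_of_pow_apply_eq hpow, exp_ad_apply, neg_smul]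

/-- if `x` commutes with all iterated commutators `δ_H^n(Lℓ)` and
`δ_H^n(Lℓ*)`, then `L^n(x) = iⁿ δ_H^n(x)` for all `n` and hence
`e^{tL}(x) = e^{itH} x e^{−itH}` for all `t ≥ 0`. -/
theorem commutes_with_iterated_commutators_implies_unitary_evolution
    {Hs : Type} [NormedAddCommGroup Hs] [InnerProductSpace ℂ Hs] [CompleteSpace Hs]
    (N : ℕ) (H : Hs →L[ℂ] Hs) (hH : IsSelfAdjoint H)
    (L : Fin N → (Hs →L[ℂ] Hs))
    (𝓛 : (Hs →L[ℂ] Hs) →L[ℂ] (Hs →L[ℂ] Hs))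
    (h𝓛 : ∀ y, 𝓛 y = Complex.I • (H * y - y * H) -
      (1/2 : ℂ) • ∑ ℓ, (star (L ℓ) * L ℓ * y - 2 * (star (L ℓ) * y * L ℓ) +
        y * (star (L ℓ) * L ℓ)))
    (x : Hs →L[ℂ] Hs)
    (hcomm : ∀ (n : ℕ) (ℓ : Fin N),
      Commute x (iterComm H (L ℓ) n) ∧ Commute x (iterComm H (star (L ℓ)) n)) :
    (∀ n : ℕ, (𝓛 ^ n) x = Complex.I ^ n • iterComm H x n) ∧
    (∀ t : ℝ, 0 ≤ t →
      NormedSpace.exp (t • 𝓛) x =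
        NormedSpace.exp ((Complex.I * t) • H) * x *
          NormedSpace.exp ((-(Complex.I * t)) • H)) :=
  commutes_with_iterated_commutators_implies_unitary_evolution_general N H L 𝓛 h𝓛 x hcomm
end

section
/- An orthogonal projection p ∈ B(H) satisfies L(p) = 0 for a GKSL generator L if and only if p commutes with all operators L_ℓ and with H. Consequently p is a fixed point of the semigroup T_t = e^{tL} if and only if p commutes with all L_ℓ, L_ℓ* and H. -/
/-!
Conjugating `L(p)` by `p⊥ = 1 - p` kills the Hamiltonian part and leaves
`Σ_ℓ (p L_ℓ p⊥)* (p L_ℓ p⊥)`, a sum of positive elements, so `L(p) = 0` forces `p L_ℓ p⊥ = 0`.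
Since `L(1 - p) = -L(p)`, the same holds with `p` and `p⊥` exchanged, hence `p` commutes with
every `L_ℓ`; then the dissipative part of `L(p)` vanishes and `L(p) = i[H, p]`.
For the semigroup, `t ↦ e^{tL} p` has derivative `e^{tL} L(p) = L(e^{tL} p)`, so `p` is fixed
for all `t ≥ 0` exactly when `L(p) = 0`.
-/

theorem commute_of_mul_mul_one_sub_eq_zero {A : Type*} [Ring A] {p l : A}
    (h₁ : p * l * (1 - p) = 0) (h₂ : (1 - p) * l * p = 0) : Commute p l := by
  rw [mul_sub, mul_one, sub_eq_zero] at h₁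
  rw [sub_mul, sub_mul, one_mul, sub_eq_zero] at h₂
  exact h₁.trans h₂.symm

theorem IsSelfAdjoint.commute_star_of_commute {A : Type*} [Mul A] [StarMul A] {p l : A}
    (hp : IsSelfAdjoint p) (h : Commute p l) : Commute p (star l) :=
  commute_star_comm.mp (hp.star_eq.symm ▸ h)

section StarRing
variable {A : Type*} [Ring A] [StarRing A]

def dissipator (l y : A) : A := star l * l * y - 2 * (star l * y * l) + y * (star l * l)

theorem dissipator_one_sub (l y : A) : dissipator l (1 - y) = -dissipator l y := by
  unfold dissipator; noncomm_ring

theorem dissipator_eq_zero_of_commute_s6 {l p : A} (hp : IsSelfAdjoint p) (h : Commute p l) :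
    dissipator l p = 0 := by
  have h' : Commute p (star l) := hp.commute_star_of_commute h
  have e₁ : star l * l * p = star l * (p * l) := by rw [mul_assoc, h.eq]
  have e₂ : p * (star l * l) = star l * (p * l) := by rw [← mul_assoc, h'.eq, mul_assoc]
  rw [dissipator, e₁, e₂, mul_assoc (star l), two_mul]
  abel

theorem one_sub_mul_dissipator_mul_one_sub {p : A} (hp : IsStarProjection p) (l : A) :
    (1 - p) * dissipator l p * (1 - p) = -(2 * (star (p * l * (1 - p)) * (p * l * (1 - p)))) := by
  have hpp : p * p = p := hp.isIdempotentElem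
  have hpp' (x : A) : p * (p * x) = p * x := by rw [← mul_assoc, hpp]
  have hstar : star (p * l * (1 - p)) = (1 - p) * (star l * p) := by
    simp [star_mul, hp.isSelfAdjoint.star_eq, mul_assoc]
  rw [hstar, dissipator]
  simp only [mul_sub, sub_mul, mul_one, one_mul, mul_assoc, hpp, hpp', two_mul, add_mul, mul_add]
  abel

variable [Algebra ℂ A] {ι : Type*} [Fintype ι]

noncomputable def gkslGenerator (H : A) (L : ι → A) (y : A) : A :=
  Complex.I • (H * y - y * H) - (1 / 2 : ℂ) • ∑ ℓ, dissipator (L ℓ) y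

theorem gkslGenerator_one_sub (H : A) (L : ι → A) (y : A) :
    gkslGenerator H L (1 - y) = -gkslGenerator H L y := by
  have hcomm : H * (1 - y) - (1 - y) * H = -(H * y - y * H) := by noncomm_ring
  simp only [gkslGenerator, dissipator_one_sub, hcomm, Finset.sum_neg_distrib, smul_neg]
  abel

theorem gkslGenerator_eq_of_commute (H : A) {L : ι → A} {p : A} (hp : IsSelfAdjoint p)
    (h : ∀ ℓ, Commute p (L ℓ)) : gkslGenerator H L p = Complex.I • (H * p - p * H) := by
  simp [gkslGenerator, dissipator_eq_zero_of_commute_s6 hp (h _)]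

theorem one_sub_mul_gkslGenerator_mul_one_sub (H : A) (L : ι → A) {p : A}
    (hp : IsStarProjection p) :
    (1 - p) * gkslGenerator H L p * (1 - p) =
      ∑ ℓ, star (p * L ℓ * (1 - p)) * (p * L ℓ * (1 - p)) := by
  have hpp : p * p = p := hp.isIdempotentElem
  have hpp' (x : A) : p * (p * x) = p * x := by rw [← mul_assoc, hpp]
  have hH : (1 - p) * (H * p - p * H) * (1 - p) = 0 := by
    simp only [mul_sub, sub_mul, mul_one, one_mul, mul_assoc, hpp, hpp']; abel
  have hdist (q x y : A) (a b : ℂ) :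
      q * (a • x - b • y) * q = a • (q * x * q) - b • (q * y * q) := by
    simp only [mul_sub, sub_mul, mul_smul_comm, smul_mul_assoc]
  rw [gkslGenerator, hdist, hH, smul_zero, zero_sub, Finset.mul_sum, Finset.sum_mul]
  simp only [one_sub_mul_dissipator_mul_one_sub hp, Finset.sum_neg_distrib, smul_neg, neg_neg,
    ← Finset.mul_sum]
  rw [two_mul, ← two_smul ℂ, smul_smul]
  norm_num

end StarRing

section CStarAlgebra
variable {A : Type*} [CStarAlgebra A] [PartialOrder A] [StarOrderedRing A]

theorem eq_zero_of_sum_star_mul_self_eq_zero {ι : Type*} {s : Finset ι} {a : ι → A}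
    (h : ∑ i ∈ s, star (a i) * a i = 0) {i : ι} (hi : i ∈ s) : a i = 0 :=
  CStarRing.star_mul_self_eq_zero_iff _ |>.mp <|
    (Finset.sum_eq_zero_iff_of_nonneg fun j _ => star_mul_self_nonneg (a j)).mp h i hi

theorem mul_mul_one_sub_eq_zero_of_gkslGenerator_eq_zero {ι : Type*} [Fintype ι] {H : A}
    {L : ι → A} {p : A} (hp : IsStarProjection p) (h : gkslGenerator H L p = 0) (ℓ : ι) :
    p * L ℓ * (1 - p) = 0 := by
  refine eq_zero_of_sum_star_mul_self_eq_zero (a := fun ℓ => p * L ℓ * (1 - p)) ?_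
    (Finset.mem_univ ℓ)
  rw [← one_sub_mul_gkslGenerator_mul_one_sub H L hp, h, mul_zero, zero_mul]

theorem gkslGenerator_eq_zero_iff {ι : Type*} [Fintype ι] (H : A) (L : ι → A) {p : A}
    (hp : IsStarProjection p) :
    gkslGenerator H L p = 0 ↔ (∀ ℓ, Commute p (L ℓ)) ∧ Commute p H := by
  constructor
  · intro h
    have h' : gkslGenerator H L (1 - p) = 0 := by rw [gkslGenerator_one_sub, h, neg_zero]
    have hL (ℓ : ι) : Commute p (L ℓ) := by
      refine commute_of_mul_mul_one_sub_eq_zero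
        (mul_mul_one_sub_eq_zero_of_gkslGenerator_eq_zero hp h ℓ) ?_
      simpa using mul_mul_one_sub_eq_zero_of_gkslGenerator_eq_zero hp.one_sub h' ℓ
    rw [gkslGenerator_eq_of_commute H hp.isSelfAdjoint hL,
      smul_eq_zero_iff_right Complex.I_ne_zero, sub_eq_zero] at h
    exact ⟨hL, h.symm⟩
  · rintro ⟨hL, hH⟩
    rw [gkslGenerator_eq_of_commute H hp.isSelfAdjoint hL, hH.eq, sub_self, smul_zero]

end CStarAlgebra

theorem NormedSpace.exp_smul_apply_eq_self_iff {E : Type*} [NormedAddCommGroup E]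
    [NormedSpace ℂ E] [CompleteSpace E] (A : E →L[ℂ] E) (x : E) :
    (∀ t : ℝ, 0 ≤ t → NormedSpace.exp (t • A) x = x) ↔ A x = 0 := by
  let ev : (E →L[ℂ] E) →L[ℝ] E := (ContinuousLinearMap.apply ℂ E x).restrictScalars ℝ
  have hderiv (t : ℝ) :
      HasDerivAt (fun s : ℝ => NormedSpace.exp (s • A) x) (NormedSpace.exp (t • A) (A x)) t :=
    ev.hasFDerivAt.comp_hasDerivAt t (hasDerivAt_exp_smul_const A t)
  have hderiv' (t : ℝ) :
      HasDerivAt (fun s : ℝ => NormedSpace.exp (s • A) x) (A (NormedSpace.exp (t • A) x)) t :=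
    ev.hasFDerivAt.comp_hasDerivAt t (hasDerivAt_exp_smul_const' A t)
  constructor
  · intro h
    have hconst : (fun s : ℝ => NormedSpace.exp (s • A) x) =ᶠ[nhds 1] fun _ => x :=
      (lt_mem_nhds one_pos).mono fun s hs => h s hs.le
    have := (hderiv' 1).unique ((hasDerivAt_const (1 : ℝ) x).congr_of_eventuallyEq hconst)
    rwa [h 1 zero_le_one] at this
  · intro hA t _
    simpa using is_const_of_deriv_eq_zero (fun s => (hderiv s).differentiableAt)
      (fun s => by rw [(hderiv s).deriv, hA, map_zero]) t 0

theorem projection_fixed_iff_commutes_general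
    {Hs : Type} [NormedAddCommGroup Hs] [InnerProductSpace ℂ Hs] [CompleteSpace Hs]
    (N : ℕ) (H : Hs →L[ℂ] Hs)
    (L : Fin N → (Hs →L[ℂ] Hs))
    (𝓛 : (Hs →L[ℂ] Hs) →L[ℂ] (Hs →L[ℂ] Hs))
    (h𝓛 : ∀ y, 𝓛 y = Complex.I • (H * y - y * H) -
      (1/2 : ℂ) • ∑ ℓ, (star (L ℓ) * L ℓ * y - 2 * (star (L ℓ) * y * L ℓ) +
        y * (star (L ℓ) * L ℓ)))
    (p : Hs →L[ℂ] Hs) (hp : IsSelfAdjoint p ∧ p * p = p) :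
    (𝓛 p = 0 ↔ ((∀ ℓ, Commute p (L ℓ)) ∧ Commute p H)) ∧
    ((∀ t : ℝ, 0 ≤ t → NormedSpace.exp (t • 𝓛) p = p) ↔
      ((∀ ℓ, Commute p (L ℓ) ∧ Commute p (star (L ℓ))) ∧ Commute p H)) := by
  have hgen : 𝓛 p = gkslGenerator H L p := h𝓛 p
  have hfixed := gkslGenerator_eq_zero_iff H L (p := p) ⟨hp.2, hp.1⟩
  rw [NormedSpace.exp_smul_apply_eq_self_iff, hgen, hfixed]
  refine ⟨Iff.rfl, and_congr_left' <| forall_congr' fun ℓ => ?_⟩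
  exact (and_iff_left_of_imp hp.1.commute_star_of_commute).symm

/-- a projection `p` satisfies `L(p) = 0` iff it commutes with all
`Lℓ` and with `H`; consequently `p` is a fixed point of `T_t = e^{tL}` iff it
commutes with all `Lℓ`, `Lℓ*` and `H`. -/
theorem projection_fixed_iff_commutes
    {Hs : Type} [NormedAddCommGroup Hs] [InnerProductSpace ℂ Hs] [CompleteSpace Hs]
    (N : ℕ) (H : Hs →L[ℂ] Hs) (hH : IsSelfAdjoint H)
    (L : Fin N → (Hs →L[ℂ] Hs))
    (𝓛 : (Hs →L[ℂ] Hs) →L[ℂ] (Hs →L[ℂ] Hs))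
    (h𝓛 : ∀ y, 𝓛 y = Complex.I • (H * y - y * H) -
      (1/2 : ℂ) • ∑ ℓ, (star (L ℓ) * L ℓ * y - 2 * (star (L ℓ) * y * L ℓ) +
        y * (star (L ℓ) * L ℓ)))
    (p : Hs →L[ℂ] Hs) (hp : IsSelfAdjoint p ∧ p * p = p) :
    (𝓛 p = 0 ↔ ((∀ ℓ, Commute p (L ℓ)) ∧ Commute p H)) ∧
    ((∀ t : ℝ, 0 ≤ t → NormedSpace.exp (t • 𝓛) p = p) ↔
      ((∀ ℓ, Commute p (L ℓ) ∧ Commute p (star (L ℓ))) ∧ Commute p H)) :=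
  projection_fixed_iff_commutes_general N H L 𝓛 h𝓛 p hp
end

section
/- Let T be a quantum Markov semigroup on B(H) and F(T) = {x : T_t(x) = x for all t}. Then F(T) is a *-algebra if and only if F(T) ⊆ N(T), where N(T) is the decoherence-free subalgebra. -/
/-!
A unital completely positive `*`-map `S` satisfies the Kadison–Schwarz inequality in the
strong form that the defect `D(a, z) = S (a⋆ z) - S(a)⋆ S(z)` is a positive sesquilinear
form in `(a, z)`. By Cauchy–Schwarz, `D(a, a) = 0` forces `D(a, z) = 0` for all `z`, i.e. an
`a` with `S (a⋆ a) = S(a)⋆ S(a)` lies in the multiplicative domain of `S`.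

If `F(T) ⊆ N(T)`, then for `x, y ∈ F(T)` this gives `T_t (x y) = T_t(x) T_t(y) = x y`.
Conversely, if `F(T)` is an algebra then `x⋆ x, x x⋆ ∈ F(T)` for `x ∈ F(T)`, so both Schwarz
equalities defining `N(T)` reduce to `x⋆ x = x⋆ x` and `x x⋆ = x x⋆`.
-/

open scoped InnerProductSpace ComplexConjugate

namespace IsCompletelyPositive

variable {H : Type} [NormedAddCommGroup H] [InnerProductSpace ℂ H] [CompleteSpace H]
  {S : (H →L[ℂ] H) →ₗ[ℂ] (H →L[ℂ] H)}

theorem inner_star_apply (A : H →L[ℂ] H) (x y : H) : ⟪x, star A y⟫_ℂ = ⟪A x, y⟫_ℂ := by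
  rw [ContinuousLinearMap.star_eq_adjoint, ContinuousLinearMap.adjoint_inner_right]

theorem re_sum_inner_nonneg (hS : IsCompletelyPositive S) {n : ℕ} (a : Fin n → H →L[ℂ] H)
    (v : Fin n → H) :
    0 ≤ (∑ i, ∑ j, ⟪v i, S (star (a i) * a j) (v j)⟫_ℂ).re := by
  rcases subsingleton_or_nontrivial H with _ | _
  · simp [Subsingleton.elim (v _) 0]
  obtain ⟨ζ, hζ⟩ := exists_norm_eq H (zero_le_one : (0 : ℝ) ≤ 1)
  -- rank-one operators `b i = |v i⟩⟨ζ|` with `‖ζ‖ = 1` send `ζ` to `v i`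
  set b : Fin n → H →L[ℂ] H := fun i => (innerSL ℂ ζ).smulRight (v i)
  have hb : ∀ i, b i ζ = v i := fun i => by simp [b, hζ]
  have hP := (hS n a b).re_inner_nonneg_right ζ
  simpa only [sum_apply, inner_sum, mul_apply_eq_comp, inner_star_apply, hb,
    RCLike.re_to_complex] using hP

variable (S) in
noncomputable def schwarzDefect (a z : H →L[ℂ] H) : H →L[ℂ] H := S (star a * z) - star (S a) * S z

theorem inner_schwarzDefect (a z : H →L[ℂ] H) (ξ η : H) :
    ⟪ξ, schwarzDefect S a z η⟫_ℂ = ⟪ξ, S (star a * z) η⟫_ℂ - ⟪S a ξ, S z η⟫_ℂ := by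
  rw [schwarzDefect, sub_apply, inner_sub_right, mul_apply_eq_comp, inner_star_apply]

theorem schwarzDefect_form_nonneg (hS : IsCompletelyPositive S) (hu : S 1 = 1)
    (hr : ∀ x, S (star x) = star (S x)) (a z : H →L[ℂ] H) (ξ η : H) :
    0 ≤ (⟪ξ, schwarzDefect S a a ξ⟫_ℂ).re + 2 * (⟪ξ, schwarzDefect S a z η⟫_ℂ).re
      + (⟪η, schwarzDefect S z z η⟫_ℂ).re := by
  -- complete positivity for the triple `(1, a, z)` against `(-(S a ξ + S z η), ξ, η)`
  have h := hS.re_sum_inner_nonneg ![1, a, z] ![-(S a ξ + S z η), ξ, η]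
  have hza : star z * a = star (star a * z) := by rw [star_mul, star_star]
  have hsum : ∑ i, ∑ j, ⟪![-(S a ξ + S z η), ξ, η] i,
        S (star (![1, a, z] i) * ![1, a, z] j) (![-(S a ξ + S z η), ξ, η] j)⟫_ℂ
      = ⟪ξ, schwarzDefect S a a ξ⟫_ℂ + ⟪ξ, schwarzDefect S a z η⟫_ℂ
        + conj ⟪ξ, schwarzDefect S a z η⟫_ℂ + ⟪η, schwarzDefect S z z η⟫_ℂ := by
    simp only [Fin.sum_univ_three, Matrix.cons_val_zero, Matrix.cons_val_one,
      Matrix.cons_val_two, Matrix.head_cons, Matrix.tail_cons, star_one, one_mul, mul_one,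
      hu, hr, hza, inner_star_apply, one_apply_eq_self, inner_schwarzDefect,
      map_sub, inner_conj_symm, inner_neg_left, inner_neg_right, inner_add_left,
      inner_add_right]
    ring
  rw [hsum] at h
  simpa only [Complex.add_re, Complex.conj_re, two_mul, add_assoc] using h

theorem map_star_mul_of_map_star_mul_self (hS : IsCompletelyPositive S) (hu : S 1 = 1)
    (hr : ∀ x, S (star x) = star (S x)) {a : H →L[ℂ] H}
    (ha : S (star a * a) = star (S a) * S a) (z : H →L[ℂ] H) :
    S (star a * z) = star (S a) * S z := by
  have haa : schwarzDefect S a a = 0 := sub_eq_zero.mpr ha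
  rw [← sub_eq_zero, ← schwarzDefect]
  ext η
  set w := schwarzDefect S a z η
  set K := (⟪η, schwarzDefect S z z η⟫_ℂ).re
  -- testing the form against `ξ = -s w` gives `2 s ‖w‖² ≤ K` for every real `s`
  have hline : ∀ s : ℝ, 2 * s * ‖w‖ ^ 2 ≤ K := fun s => by
    have h := hS.schwarzDefect_form_nonneg hu hr a z (-(s : ℂ) • w) η
    rw [haa, zero_apply, inner_zero_right, inner_smul_left,
      inner_self_eq_norm_sq_to_K] at h
    simp only [map_neg, Complex.conj_ofReal, Complex.zero_re, zero_add] at h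
    norm_cast at h
    simp only [Complex.re_ofReal_mul, Complex.coe_algebraMap, Complex.ofReal_re] at h
    linarith
  by_contra hw
  have hpos : 0 < ‖w‖ := norm_pos_iff.mpr hw
  have h := hline ((K + 1) / (2 * ‖w‖ ^ 2))
  rw [show 2 * ((K + 1) / (2 * ‖w‖ ^ 2)) * ‖w‖ ^ 2 = K + 1 by field_simp] at h
  linarith

end IsCompletelyPositive

theorem fixed_points_algebra_iff_subset_df_general
    {H : Type} [NormedAddCommGroup H] [InnerProductSpace ℂ H] [CompleteSpace H]
    (T : ℝ → (H →L[ℂ] H) →ₗ[ℂ] (H →L[ℂ] H))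
    (hCP : ∀ t, 0 ≤ t → IsCompletelyPositive (T t))
    (hunital : ∀ t, 0 ≤ t → T t 1 = 1)
    (hreal : ∀ t, 0 ≤ t → ∀ a, T t (star a) = star (T t a)) :
    (∀ x ∈ {x : H →L[ℂ] H | ∀ t, 0 ≤ t → T t x = x},
       ∀ y ∈ {x : H →L[ℂ] H | ∀ t, 0 ≤ t → T t x = x},
         x * y ∈ {x : H →L[ℂ] H | ∀ t, 0 ≤ t → T t x = x}) ↔
    {x : H →L[ℂ] H | ∀ t, 0 ≤ t → T t x = x} ⊆
      {x : H →L[ℂ] H | ∀ t, 0 ≤ t →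
        T t (star x * x) = star (T t x) * T t x ∧
        T t (x * star x) = T t x * star (T t x)} := by
  have star_mem {x : H →L[ℂ] H} (hx : ∀ t, 0 ≤ t → T t x = x) :
      ∀ t, 0 ≤ t → T t (star x) = star x := fun t ht => by rw [hreal t ht, hx t ht]
  constructor
  · intro hmul x hx t ht
    rw [hmul _ (star_mem hx) x hx t ht, hmul x hx _ (star_mem hx) t ht, hx t ht]
    exact ⟨rfl, rfl⟩
  · intro hsub x hx y hy t ht
    have hxx : T t (star (star x) * star x) = star (T t (star x)) * T t (star x) := by
      rw [star_star, star_mem hx t ht, star_star, (hsub hx t ht).2, hx t ht]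
    have hmul := (hCP t ht).map_star_mul_of_map_star_mul_self (hunital t ht) (hreal t ht) hxx y
    rwa [star_star, star_mem hx t ht, star_star, hy t ht] at hmul

/-- the fixed point set `F(T)` of a quantum Markov semigroup is a
*-algebra (i.e. closed under products; it is always a self-adjoint subspace)
if and only if `F(T)` is contained in the decoherence-free subalgebra `N(T)`. -/
theorem fixed_points_algebra_iff_subset_df
    {H : Type} [NormedAddCommGroup H] [InnerProductSpace ℂ H] [CompleteSpace H]
    (T : ℝ → (H →L[ℂ] H) →ₗ[ℂ] (H →L[ℂ] H))
    (hCP : ∀ t, 0 ≤ t → IsCompletelyPositive (T t))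
    (hunital : ∀ t, 0 ≤ t → T t 1 = 1)
    (hreal : ∀ t, 0 ≤ t → ∀ a, T t (star a) = star (T t a))
    (hzero : T 0 = LinearMap.id)
    (hsemi : ∀ t s, 0 ≤ t → 0 ≤ s → ∀ x, T (t + s) x = T t (T s x)) :
    (∀ x ∈ {x : H →L[ℂ] H | ∀ t, 0 ≤ t → T t x = x},
       ∀ y ∈ {x : H →L[ℂ] H | ∀ t, 0 ≤ t → T t x = x},
         x * y ∈ {x : H →L[ℂ] H | ∀ t, 0 ≤ t → T t x = x}) ↔
    {x : H →L[ℂ] H | ∀ t, 0 ≤ t → T t x = x} ⊆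
      {x : H →L[ℂ] H | ∀ t, 0 ≤ t →
        T t (star x * x) = star (T t x) * T t x ∧
        T t (x * star x) = T t x * star (T t x)} :=
  fixed_points_algebra_iff_subset_df_general T hCP hunital hreal
end

section
/- If a quantum Markov semigroup T on B(H) has a faithful normal invariant state ρ, then the fixed point set F(T) = {x : T_t(x) = x ∀t} is a von Neumann subalgebra of B(H), i.e. it is closed under products. -/
open scoped ComplexOrder

/-- if a quantum Markov semigroup has a faithful invariant state,
then its fixed point set is closed under products (hence a von Neumann algebra). -/
theorem fixed_points_algebra_of_faithful_invariant_state
    {H : Type} [NormedAddCommGroup H] [InnerProductSpace ℂ H] [CompleteSpace H]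
    (T : ℝ → (H →L[ℂ] H) →ₗ[ℂ] (H →L[ℂ] H))
    (hCP : ∀ t, 0 ≤ t → IsCompletelyPositive (T t))
    (hunital : ∀ t, 0 ≤ t → T t 1 = 1)
    (hreal : ∀ t, 0 ≤ t → ∀ a, T t (star a) = star (T t a))
    (hzero : T 0 = LinearMap.id)
    (hsemi : ∀ t s, 0 ≤ t → 0 ≤ s → ∀ x, T (t + s) x = T t (T s x))
    -- a faithful invariant state, as a positive, unital, faithful, invariant functional
    (ρ : (H →L[ℂ] H) →ₗ[ℂ] ℂ)
    (hρpos : ∀ a : H →L[ℂ] H, a.IsPositive → 0 ≤ ρ a)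
    (hρone : ρ 1 = 1)
    (hρfaithful : ∀ a : H →L[ℂ] H, a.IsPositive → ρ a = 0 → a = 0)
    (hρinv : ∀ t, 0 ≤ t → ∀ x, ρ (T t x) = ρ x) :
    ∀ x y : H →L[ℂ] H,
      (∀ t, 0 ≤ t → T t x = x) → (∀ t, 0 ≤ t → T t y = y) →
      (∀ t, 0 ≤ t → T t (x * y) = x * y) := by
  intro x y hx hy t ht
  -- Step 1 (Kadison–Schwarz + invariance + faithfulness): fixed c ⇒ star c * c fixed
  have key : ∀ c : H →L[ℂ] H, (∀ s, 0 ≤ s → T s c = c) →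
      T t (star c * c) = star c * c := by
    intro c hc
    have hpos : (T t (star c * c) - star c * c).IsPositive := by
      have h := hCP t ht 2 ![c, 1] ![1, -c]
      have hTc : T t c = c := hc t ht
      have hTsc : T t (star c) = star c := by rw [hreal t ht, hTc]
      simpa [Fin.sum_univ_two, hTc, hTsc, hunital t ht, sub_mul, mul_sub,
        sub_eq_add_neg, add_comm, add_left_comm, add_assoc] using h
    have hρ0 : ρ (T t (star c * c) - star c * c) = 0 := by
      rw [map_sub, hρinv t ht]; ring
    exact sub_eq_zero.mp (hρfaithful _ hpos hρ0)
  -- Step 2: star x is fixed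
  have hsx : ∀ s, 0 ≤ s → T s (star x) = star x := fun s hs => by
    rw [hreal s hs, hx s hs]
  -- the four polarization vectors are fixed
  have hc0 : ∀ s, 0 ≤ s → T s (y + star x) = y + star x := fun s hs => by
    rw [map_add, hy s hs, hsx s hs]
  have hc1 : ∀ s, 0 ≤ s → T s (y + Complex.I • star x) = y + Complex.I • star x :=
    fun s hs => by rw [map_add, map_smul, hy s hs, hsx s hs]
  have hc2 : ∀ s, 0 ≤ s → T s (y - star x) = y - star x := fun s hs => by
    rw [map_sub, hy s hs, hsx s hs]
  have hc3 : ∀ s, 0 ≤ s → T s (y - Complex.I • star x) = y - Complex.I • star x :=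
    fun s hs => by rw [map_sub, map_smul, hy s hs, hsx s hs]
  have h0 := key _ hc0
  have h1 := key _ hc1
  have h2 := key _ hc2
  have h3 := key _ hc3
  -- Step 3: polarization identity
  have hid : x * y = (1/4 : ℂ) • (star (y + star x) * (y + star x))
      + (Complex.I/4 : ℂ) • (star (y + Complex.I • star x) * (y + Complex.I • star x))
      - (1/4 : ℂ) • (star (y - star x) * (y - star x))
      - (Complex.I/4 : ℂ) • (star (y - Complex.I • star x) * (y - Complex.I • star x)) := by
    simp only [star_add, star_sub, star_smul, star_star, Complex.star_def, Complex.conj_I,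
      add_mul, sub_mul, mul_add, mul_sub, smul_mul_assoc, mul_smul_comm, smul_smul, smul_add,
      smul_sub, neg_smul, neg_mul, mul_neg, smul_neg, neg_neg, Complex.I_mul_I]
    match_scalars <;> · norm_num [Complex.ext_iff]
  rw [hid]
  simp only [map_add, map_sub, map_smul, h0, h1, h2, h3]
end

section
/- Let p be a subharmonic projection for a quantum Markov semigroup T. Then p T_t(p x p) p = p T_t(x) p for all x ∈ B(H), t ≥ 0, and consequently T_t^p(x) := p T_t(x) p defines a semigroup of unital completely positive maps on p B(H) p. -/
open ComplexConjugate ContinuousLinearMap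
open scoped InnerProductSpace ComplexOrder

lemma eq_zero_of_forall_nonneg_mul_add {a b : ℝ} (h : ∀ t : ℝ, 0 ≤ t * a + b) : a = 0 := by
  by_contra ha
  have := h (-(b + 1) / a)
  rw [div_mul_cancel₀ _ ha] at this
  linarith

lemma Complex.eq_zero_of_forall_nonneg_conj_mul_add {m n β : ℂ}
    (h : ∀ c : ℂ, 0 ≤ conj c * m + c * n + β) : m = 0 := by
  -- `c ↦ conj c * m + c * n` is `ℝ`-linear and bounded below by `-β`, hence zero.
  have hw : ∀ c : ℂ, conj c * m + c * n = 0 := by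
    intro c
    have ht : ∀ t : ℝ, 0 ≤ t * (conj c * m + c * n) + β := fun t => by
      simpa [mul_add, mul_assoc] using h (t * c)
    apply Complex.ext
    · exact eq_zero_of_forall_nonneg_mul_add fun t => by
        simpa using (Complex.le_def.mp (ht t)).1
    · have him : ∀ t : ℝ, 0 = t * (conj c * m + c * n).im + β.im := fun t => by
        simpa using (Complex.le_def.mp (ht t)).2
      rw [Complex.zero_im]; linarith [him 0, him 1]
  have h1 := hw 1
  have hI := hw Complex.I
  simp only [map_one, one_mul, Complex.conj_I, neg_mul, neg_add_eq_sub, ← mul_sub,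
    mul_eq_zero, Complex.I_ne_zero, false_or, sub_eq_zero] at h1 hI
  rw [hI] at h1
  simpa using h1

lemma ContinuousLinearMap.eq_zero_of_forall_nonneg_conj_smul_add {H : Type*}
    [NormedAddCommGroup H] [InnerProductSpace ℂ H] [CompleteSpace H] {M N B : H →L[ℂ] H}
    (h : ∀ c : ℂ, 0 ≤ conj c • M + c • N + B) : M = 0 := by
  have hM : ∀ v : H, ⟪v, M v⟫_ℂ = 0 := fun v =>
    Complex.eq_zero_of_forall_nonneg_conj_mul_add fun c => by
      simpa [inner_add_right, inner_smul_right] using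
        ((nonneg_iff_isPositive _).mp (h c)).inner_nonneg_right v
  refine coe_injective ((inner_map_self_eq_zero (M : H →ₗ[ℂ] H)).mp fun v => ?_)
  simpa using congrArg conj (hM v)

namespace IsCompletelyPositive

variable {H : Type} [NormedAddCommGroup H] [InnerProductSpace ℂ H] [CompleteSpace H]
  {T : (H →L[ℂ] H) →ₗ[ℂ] (H →L[ℂ] H)} {p : H →L[ℂ] H}

lemma conj_map_star_mul_self_nonneg (hT : IsCompletelyPositive T) (a b : H →L[ℂ] H) :
    0 ≤ star b * T (star a * a) * b := by
  simpa [nonneg_iff_isPositive] using hT 1 ![a] ![b]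

lemma conj_map_star_mul_eq_zero (hT : IsCompletelyPositive T) {a b : H →L[ℂ] H}
    (hab : star b * T (star a * a) * b = 0) (x : H →L[ℂ] H) :
    star b * T (star a * x) * b = 0 ∧ star b * T (star x * a) * b = 0 := by
  have key : ∀ c : ℂ, 0 ≤ conj c • (star b * T (star a * x) * b) +
      c • (star b * T (star x * a) * b) + star b * T (star x * x) * b := fun c => by
    -- the `(a, a)` entry of this 2×2 sum, `(conj c * c) • star b * T (star a * a) * b`, vanishes
    have h := (nonneg_iff_isPositive _).mpr (hT 2 ![a, x] ![c • b, b])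
    simpa [Fin.sum_univ_two, star_smul, smul_mul_assoc, mul_smul_comm, hab, add_assoc] using h
  have key' : ∀ c : ℂ, 0 ≤ conj c • (star b * T (star x * a) * b) +
      c • (star b * T (star a * x) * b) + star b * T (star x * x) * b := fun c => by
    simpa [add_comm (conj c • _)] using key (conj c)
  exact ⟨eq_zero_of_forall_nonneg_conj_smul_add key, eq_zero_of_forall_nonneg_conj_smul_add key'⟩

lemma of_eq_star_mul_mul (hT : IsCompletelyPositive T) (v : H →L[ℂ] H)
    {S : (H →L[ℂ] H) →ₗ[ℂ] (H →L[ℂ] H)} (hS : ∀ x, S x = star v * T x * v) :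
    IsCompletelyPositive S := by
  intro n a b
  convert hT n a fun i => v * b i using 3 with i _ j _
  simp only [hS, star_mul, mul_assoc]

lemma conj_map_one_sub_eq_zero (hT : IsCompletelyPositive T) (hT1 : T 1 = 1)
    (hp : IsStarProjection p) (hsub : p ≤ T p) : p * T (1 - p) * p = 0 := by
  have hnonneg : 0 ≤ p * T (1 - p) * p := by
    simpa [hp.isSelfAdjoint.star_eq, hp.one_sub.isSelfAdjoint.star_eq,
      hp.one_sub.isIdempotentElem.eq] using hT.conj_map_star_mul_self_nonneg (1 - p) p
  have hnonpos : 0 ≤ -(p * T (1 - p) * p) := by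
    have h := star_left_conjugate_nonneg (sub_nonneg.mpr hsub) p
    simpa [hp.isSelfAdjoint.star_eq, hT1, mul_sub, sub_mul, hp.isIdempotentElem.eq] using h
  exact le_antisymm (neg_nonneg.mp hnonpos) hnonneg

lemma conj_map_self_eq_self (hT : IsCompletelyPositive T) (hT1 : T 1 = 1)
    (hp : IsStarProjection p) (hsub : p ≤ T p) : p * T p * p = p := by
  have h := hT.conj_map_one_sub_eq_zero hT1 hp hsub
  simp only [map_sub, hT1, mul_sub, sub_mul, mul_one, hp.isIdempotentElem.eq, sub_eq_zero] at h
  exact h.symm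

lemma conj_map_conj_eq_conj_map (hT : IsCompletelyPositive T) (hT1 : T 1 = 1)
    (hp : IsStarProjection p) (hsub : p ≤ T p) (x : H →L[ℂ] H) :
    p * T (p * x * p) * p = p * T x * p := by
  have hq : star p * T (star (1 - p) * (1 - p)) * p = 0 := by
    simpa [hp.isSelfAdjoint.star_eq, hp.one_sub.isSelfAdjoint.star_eq,
      hp.one_sub.isIdempotentElem.eq] using hT.conj_map_one_sub_eq_zero hT1 hp hsub
  have hleft := (hT.conj_map_star_mul_eq_zero hq x).1
  have hright := (hT.conj_map_star_mul_eq_zero hq (star (p * x))).2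
  simp only [hp.isSelfAdjoint.star_eq, hp.one_sub.isSelfAdjoint.star_eq, star_star] at hleft hright
  have hx : T x = T (p * x * p) + T ((1 - p) * x) + T (p * x * (1 - p)) := by
    rw [← map_add, ← map_add]; congr 1; noncomm_ring
  rw [hx, mul_add, mul_add, add_mul, add_mul, hleft, hright, add_zero, add_zero]

end IsCompletelyPositive

theorem reduced_semigroup_of_subharmonic_projection_general
    {H : Type} [NormedAddCommGroup H] [InnerProductSpace ℂ H] [CompleteSpace H]
    (T : ℝ → (H →L[ℂ] H) →ₗ[ℂ] (H →L[ℂ] H))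
    (hCP : ∀ t, 0 ≤ t → IsCompletelyPositive (T t))
    (hunital : ∀ t, 0 ≤ t → T t 1 = 1)
    (hsemi : ∀ t s, 0 ≤ t → 0 ≤ s → ∀ x, T (t + s) x = T t (T s x))
    (p : H →L[ℂ] H) (hp : IsSelfAdjoint p ∧ p * p = p)
    (hsub : ∀ t, 0 ≤ t → (T t p - p).IsPositive)
    (Tp : ℝ → (H →L[ℂ] H) →ₗ[ℂ] (H →L[ℂ] H))
    (hTp : ∀ t x, Tp t x = p * T t x * p) :
    (∀ t, 0 ≤ t → ∀ x, Tp t (p * x * p) = Tp t x) ∧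
    (∀ t s, 0 ≤ t → 0 ≤ s → ∀ x, Tp (t + s) x = Tp t (Tp s x)) ∧
    (∀ t, 0 ≤ t → Tp t p = p) ∧
    (∀ t, 0 ≤ t → IsCompletelyPositive (Tp t)) := by
  have hproj : IsStarProjection p := ⟨hp.2, hp.1⟩
  have corner (t : ℝ) (ht : 0 ≤ t) (x : H →L[ℂ] H) :
      p * T t (p * x * p) * p = p * T t x * p :=
    (hCP t ht).conj_map_conj_eq_conj_map (hunital t ht) hproj (hsub t ht) x
  refine ⟨fun t ht x => ?_, fun t s ht hs x => ?_, fun t ht => ?_, fun t ht => ?_⟩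
  · rw [hTp, hTp, corner t ht]
  · rw [hTp, hTp, hTp, hsemi t s ht hs, corner t ht]
  · rw [hTp, (hCP t ht).conj_map_self_eq_self (hunital t ht) hproj (hsub t ht)]
  · exact (hCP t ht).of_eq_star_mul_mul p fun x => by rw [hTp, hproj.isSelfAdjoint.star_eq]

/-- for a subharmonic projection `p`,
`p T_t(p x p) p = p T_t(x) p` for all `x`, `t ≥ 0`, so that
`T^p_t(x) := p T_t(x) p` defines a semigroup of unital completely positive maps
on the corner algebra `p B(H) p`. -/
theorem reduced_semigroup_of_subharmonic_projection
    {H : Type} [NormedAddCommGroup H] [InnerProductSpace ℂ H] [CompleteSpace H]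
    (T : ℝ → (H →L[ℂ] H) →ₗ[ℂ] (H →L[ℂ] H))
    (hCP : ∀ t, 0 ≤ t → IsCompletelyPositive (T t))
    (hunital : ∀ t, 0 ≤ t → T t 1 = 1)
    (hzero : T 0 = LinearMap.id)
    (hsemi : ∀ t s, 0 ≤ t → 0 ≤ s → ∀ x, T (t + s) x = T t (T s x))
    (p : H →L[ℂ] H) (hp : IsSelfAdjoint p ∧ p * p = p)
    (hsub : ∀ t, 0 ≤ t → (T t p - p).IsPositive)
    (Tp : ℝ → (H →L[ℂ] H) →ₗ[ℂ] (H →L[ℂ] H))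
    (hTp : ∀ t x, Tp t x = p * T t x * p) :
    (∀ t, 0 ≤ t → ∀ x, Tp t (p * x * p) = Tp t x) ∧
    (∀ t s, 0 ≤ t → 0 ≤ s → ∀ x, Tp (t + s) x = Tp t (Tp s x)) ∧
    (∀ t, 0 ≤ t → Tp t p = p) ∧
    (∀ t, 0 ≤ t → IsCompletelyPositive (Tp t)) :=
  reduced_semigroup_of_subharmonic_projection_general T hCP hunital hsemi p hp hsub Tp hTp
end

section
/- Let K be a bounded self-adjoint operator on a complex separable Hilbert space k and let ω be a faithful normal state on B(k) invariant for the automorphism group α_t(a) = e^{itK} a e^{−itK}, i.e. e^{−itK} ω e^{itK} = ω for all t. Then K has pure point spectrum: there is an orthonormal basis of k consisting of eigenvectors of K. -/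
/-!
Invariance of `ω` under conjugation by `e^{itK}` for all real `t` makes `ω` commute with every
`e^{itK}`; differentiating at `t = 0` gives `Kω = ωK`, so `K` leaves every eigenspace of `ω`
invariant. As `ω` is compact, self-adjoint and injective, these eigenspaces are finite-dimensional
and, by the spectral theorem for compact self-adjoint operators, span a dense subspace.
Diagonalizing the symmetric restriction of `K` to each of them and gluing the orthonormal
eigenbases yields a Hilbert basis of eigenvectors of `K`.
-/

open NormedSpace Module.End Submodule

section Exp

variable {𝔸 : Type*} [NormedRing 𝔸] [NormedAlgebra ℝ 𝔸] [CompleteSpace 𝔸]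

theorem commute_exp_of_exp_neg_mul_mul_exp_eq_self {x b : 𝔸} (h : exp (-x) * b * exp x = b) :
    Commute (exp x) b := by
  -- `exp_add_of_commute` would need a `ℚ`-algebra structure, which `E →L[ℂ] E` does not carry.
  have hball : ∀ y : 𝔸, y ∈ Metric.eball 0 (expSeries ℝ 𝔸).radius := fun y => by
    simp [expSeries_radius_eq_top]
  have hinv : exp x * exp (-x) = 1 := by
    rw [← exp_add_of_commute_of_mem_ball (Commute.refl x).neg_right (hball _) (hball _),
      add_neg_cancel, exp_zero]
  calc exp x * b = exp x * (exp (-x) * b * exp x) := by rw [h]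
    _ = b * exp x := by rw [← mul_assoc, ← mul_assoc, hinv, one_mul]

theorem commute_of_forall_commute_exp_smul {a b : 𝔸} (h : ∀ t : ℝ, Commute (exp (t • a)) b) :
    Commute a b := by
  have hexp : HasDerivAt (fun t : ℝ => exp (t • a)) a 0 := by
    simpa using hasDerivAt_exp_smul_const (𝕂 := ℝ) a 0
  have hleft : HasDerivAt (fun t : ℝ => exp (t • a) * b) (a * b) 0 := hexp.mul_const b
  have hright : HasDerivAt (fun t : ℝ => exp (t • a) * b) (b * a) 0 := by
    simpa only [(h _).eq] using hexp.const_mul b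
  exact hleft.unique hright

end Exp

section Eigenbasis

variable {𝕜 : Type} [RCLike 𝕜] {E : Type*} [NormedAddCommGroup E] [InnerProductSpace 𝕜 E]
  [CompleteSpace E]

theorem OrthogonalFamily.exists_hilbertBasis_sigma {ι : Type*} {κ : ι → Type*}
    [∀ i, Fintype (κ i)] {V : ι → Submodule 𝕜 E}
    (hV : OrthogonalFamily 𝕜 (fun i => V i) fun i => (V i).subtypeₗᵢ)
    (hV_dense : (⨆ i, V i)ᗮ = ⊥) (b : ∀ i, OrthonormalBasis (κ i) 𝕜 (V i)) :
    ∃ B : HilbertBasis (Σ i, κ i) 𝕜 E, ∀ i j, B ⟨i, j⟩ = b i j := by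
  set v : (Σ i, κ i) → E := fun p => b p.1 p.2
  have hon : Orthonormal 𝕜 v := hV.orthonormal_sigma_orthonormal fun i => (b i).orthonormal
  have hle : (⨆ i, V i) ≤ span 𝕜 (Set.range v) := by
    refine iSup_le fun i x hx => ?_
    lift x to V i using hx
    rw [← (b i).sum_repr' x, Submodule.coe_sum]
    exact sum_mem fun j _ => smul_mem _ _ (subset_span ⟨⟨i, j⟩, rfl⟩)
  have hsp : (span 𝕜 (Set.range v))ᗮ = ⊥ :=
    eq_bot_iff.2 ((Submodule.orthogonal_le hle).trans hV_dense.le)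
  exact ⟨.mkOfOrthogonalEqBot hon hsp,
    fun i j => congrFun (HilbertBasis.coe_mkOfOrthogonalEqBot hon hsp) _⟩

theorem IsSelfAdjoint.exists_hilbertBasis_eigenvectors_of_commute {A T : E →L[𝕜] E}
    (hA : IsSelfAdjoint A) (hT : IsSelfAdjoint T) (hT_compact : IsCompactOperator T)
    (hT_ker : LinearMap.ker (T : E →ₗ[𝕜] E) = ⊥) (hAT : Commute A T) :
    ∃ (ι : Type) (b : HilbertBasis ι 𝕜 E), ∀ i, ∃ μ : ℝ, A (b i) = (μ : 𝕜) • b i := by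
  have hT_symm := hT.isSymmetric
  have hfin : ∀ μ, FiniteDimensional 𝕜 (eigenspace (T : E →ₗ[𝕜] E) μ) := fun μ => by
    rcases eq_or_ne μ 0 with rfl | hμ
    · rw [eigenspace_zero, hT_ker]
      infer_instance
    · exact T.finite_dimensional_eigenspace hT_compact μ hμ
  have hTA : Commute (T : E →ₗ[𝕜] E) A := hAT.symm.map ContinuousLinearMap.toLinearMapRingHom
  have hA_symm μ := hA.isSymmetric.restrict_invariant (mapsTo_genEigenspace_of_comm hTA μ 1)
  obtain ⟨B, hB⟩ := hT_symm.orthogonalFamily_eigenspaces.exists_hilbertBasis_sigma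
    (T.orthogonalComplement_iSup_eigenspaces_eq_bot hT_compact hT_symm)
    fun μ => (hA_symm μ).eigenvectorBasis rfl
  refine ⟨_, B, fun ⟨μ, i⟩ => ⟨(hA_symm μ).eigenvalues rfl i, ?_⟩⟩
  rw [hB]
  exact congrArg Subtype.val ((hA_symm μ).apply_eigenvectorBasis rfl i)

end Eigenbasis

theorem pure_point_spectrum_of_invariant_faithful_state_general
    {k : Type} [NormedAddCommGroup k] [InnerProductSpace ℂ k] [CompleteSpace k]
    (K ω : k →L[ℂ] k) (hK : IsSelfAdjoint K)
    -- `ω` is the density of a faithful normal state: positive, compact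
    -- (trace-class), with trivial kernel
    (hωpos : ω.IsPositive)
    (hωcompact : IsCompactOperator (⇑ω))
    (hωker : LinearMap.ker (ω : k →ₗ[ℂ] k) = ⊥)
    (hinv : ∀ t : ℝ,
      NormedSpace.exp ((-(Complex.I * t)) • K) * ω *
        NormedSpace.exp ((Complex.I * t) • K) = ω) :
    ∃ (ι : Type) (b : HilbertBasis ι ℂ k), ∀ i, ∃ μ : ℝ, K (b i) = (μ : ℂ) • b i := by
  have hexp (t : ℝ) : Commute (exp (t • (Complex.I • K))) ω := by
    have h := hinv t
    rw [neg_smul, mul_comm Complex.I, mul_smul, Complex.coe_smul] at h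
    exact commute_exp_of_exp_neg_mul_mul_exp_eq_self h
  have hcomm : Commute K ω :=
    (Commute.smul_left_iff₀ Complex.I_ne_zero).1 (commute_of_forall_commute_exp_smul hexp)
  exact hK.exists_hilbertBasis_eigenvectors_of_commute hωpos.isSelfAdjoint hωcompact hωker hcomm

/-- if `K` is a bounded self-adjoint operator on a complex
separable Hilbert space and `ω` is (the density of) a faithful normal state
invariant under the automorphism group `a ↦ e^{itK} a e^{−itK}`, i.e.
`e^{−itK} ω e^{itK} = ω` for all `t`, then `K` has pure point spectrum:
there is an orthonormal (Hilbert) basis of eigenvectors of `K`. -/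
theorem pure_point_spectrum_of_invariant_faithful_state
    {k : Type} [NormedAddCommGroup k] [InnerProductSpace ℂ k] [CompleteSpace k]
    [TopologicalSpace.SeparableSpace k]
    (K ω : k →L[ℂ] k) (hK : IsSelfAdjoint K)
    -- `ω` is the density of a faithful normal state: positive, compact
    -- (trace-class), with trivial kernel
    (hωpos : ω.IsPositive)
    (hωcompact : IsCompactOperator (⇑ω))
    (hωker : LinearMap.ker (ω : k →ₗ[ℂ] k) = ⊥)
    (hinv : ∀ t : ℝ,
      NormedSpace.exp ((-(Complex.I * t)) • K) * ω *
        NormedSpace.exp ((Complex.I * t) • K) = ω) :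
    ∃ (ι : Type) (b : HilbertBasis ι ℂ k), ∀ i, ∃ μ : ℝ, K (b i) = (μ : ℂ) • b i :=
  pure_point_spectrum_of_invariant_faithful_state_general K ω hK hωpos hωcompact hωker hinv
end

section
/- Let S be the diagonal unitary on ℂ^m with S g_h = ω^{hk} g_h (ω = e^{2πi/d}, d = km), let q be coprime to m, and let M_0 = Σ_h (|g_{h+1}⟩⟨g_h| + |g_{h−1}⟩⟨g_h|) (indices mod m). Then any operator X on ℂ^m commuting with S^q and with [M_0, S^q] is a scalar multiple of the identity. -/
/-- The eigenvalue map `h ↦ ω^{h.val·k·q}` is injective when `q` is coprime to `m`. -/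
lemma eig_inj (k m : ℕ) [NeZero m] (hk : 0 < k) (q : ℕ) (hq : Nat.Coprime q m)
    (ω : ℂ) (hω : ω = Complex.exp (2 * Real.pi * Complex.I / (k * m))) :
    Function.Injective (fun h : ZMod m => ω ^ (h.val * k * q)) := by
  set ζ : ℂ := Complex.exp (2 * Real.pi * Complex.I / m) with hζdef
  have hm : (m : ℕ) ≠ 0 := NeZero.ne m
  have hζ : IsPrimitiveRoot ζ m := Complex.isPrimitiveRoot_exp m hm
  have hωk : ω ^ k = ζ := by
    rw [hω, ← Complex.exp_nat_mul, hζdef]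
    congr 1
    have hk' : (k : ℂ) ≠ 0 := Nat.cast_ne_zero.mpr hk.ne'
    have hm' : (m : ℂ) ≠ 0 := Nat.cast_ne_zero.mpr hm
    field_simp
  have hζm : ζ ^ m = 1 := hζ.pow_eq_one
  have key : ∀ a : ZMod m, ω ^ (a.val * k * q) = ζ ^ ((a * (q : ZMod m)).val) := by
    intro a
    have h1 : a.val * k * q = k * (a.val * q) := by ring
    rw [h1, pow_mul, hωk]
    have h2 : (a * (q : ZMod m)).val = a.val * q % m := by
      rw [ZMod.val_mul, ZMod.val_natCast]
      conv_rhs => rw [Nat.mul_mod]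
      conv_lhs => rw [Nat.mul_mod, Nat.mod_mod_of_dvd q dvd_rfl]
    rw [h2]
    conv_lhs => rw [← Nat.mod_add_div (a.val * q) m, pow_add, pow_mul, hζm, one_pow, mul_one]
  intro a b hab
  simp only at hab
  rw [key a, key b] at hab
  have := hζ.pow_inj (ZMod.val_lt _) (ZMod.val_lt _) hab
  have hmul : a * (q : ZMod m) = b * (q : ZMod m) := ZMod.val_injective m this
  have hu : IsUnit ((q : ZMod m)) := (ZMod.unitOfCoprime q hq).isUnit
  exact hu.mul_right_cancel hmul

/-- let `S` be the diagonal unitary on `ℂ^m` with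
`S g_h = ω^{hk} g_h` (`ω = e^{2πi/d}`, `d = km`), let `q` be coprime to `m`, and
let `M₀ = Σ_h (|g_{h+1}⟩⟨g_h| + |g_{h−1}⟩⟨g_h|)` (indices mod `m`). Then any
operator commuting with `S^q` and with `[M₀, S^q]` is a scalar multiple of the
identity. -/
theorem commutant_of_Sq_and_commutator_trivial
    (k m : ℕ) [NeZero m] (hk : 0 < k) (q : ℕ) (hq : Nat.Coprime q m)
    (ω : ℂ) (hω : ω = Complex.exp (2 * Real.pi * Complex.I / (k * m)))
    (S M₀ X : Matrix (ZMod m) (ZMod m) ℂ)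
    (hS : S = Matrix.diagonal fun h : ZMod m => ω ^ (h.val * k))
    (hM₀ : ∀ i j : ZMod m,
      M₀ i j = (if i = j + 1 then 1 else 0) + (if i = j - 1 then 1 else 0))
    (hX1 : Commute X (S ^ q))
    (hX2 : Commute X (M₀ * S ^ q - S ^ q * M₀)) :
    ∃ c : ℂ, X = c • (1 : Matrix (ZMod m) (ZMod m) ℂ) := by
  by_cases hm1 : m = 1
  · refine ⟨X 0 0, ?_⟩
    subst hm1
    ext i j
    have hi : i = 0 := Subsingleton.elim i 0
    have hj : j = 0 := Subsingleton.elim j 0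
    subst hi; subst hj
    simp [Matrix.one_apply]
  -- eigenvalue function
  set d : ZMod m → ℂ := fun h => ω ^ (h.val * k * q) with hd
  have hdinj : Function.Injective d := eig_inj k m hk q hq ω hω
  have hSq : S ^ q = Matrix.diagonal d := by
    have hv : (fun h : ZMod m => ω ^ (h.val * k)) ^ q = d := by
      funext h
      simp [hd, Pi.pow_apply, ← pow_mul]
    rw [hS, Matrix.diagonal_pow, hv]
  -- X is diagonal
  have hXoff : ∀ i j : ZMod m, i ≠ j → X i j = 0 := by
    intro i j hij
    have := congrFun (congrFun hX1.eq i) j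
    rw [hSq] at this
    rw [Matrix.mul_diagonal, Matrix.diagonal_mul] at this
    have hdij : d i ≠ d j := fun h => hij (hdinj h)
    have : X i j * (d j - d i) = 0 := by linear_combination this
    rcases mul_eq_zero.mp this with h | h
    · exact h
    · exact absurd (sub_eq_zero.mp h).symm hdij
  have hXdiag : X = Matrix.diagonal (fun h => X h h) := by
    ext i j
    by_cases hij : i = j
    · subst hij; simp
    · rw [Matrix.diagonal_apply_ne _ hij]
      exact hXoff i j hij
  -- one ≠ zero in ZMod m since m ≠ 1
  have hm2 : 1 < m := lt_of_le_of_ne (Nat.one_le_iff_ne_zero.mpr (NeZero.ne m)) (Ne.symm hm1)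
  haveI : Fact (1 < m) := ⟨hm2⟩
  have hone : (1 : ZMod m) ≠ 0 := one_ne_zero
  -- step: X (j+1) (j+1) = X j j
  have hstep : ∀ j : ZMod m, X (j + 1) (j + 1) = X j j := by
    intro j
    set C := M₀ * S ^ q - S ^ q * M₀ with hC
    have hCij : ∀ i j' : ZMod m, C i j' = M₀ i j' * d j' - d i * M₀ i j' := by
      intro i j'
      simp [hC, hSq, Matrix.mul_diagonal, Matrix.diagonal_mul, Matrix.sub_apply]
    have := congrFun (congrFun hX2.eq (j + 1)) j
    rw [hXdiag] at this
    rw [Matrix.diagonal_mul, Matrix.mul_diagonal] at this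
    rw [hXdiag] at this ⊢
    simp only [Matrix.diagonal_apply_eq] at this ⊢
    have hC1 : C (j + 1) j = (d j - d (j + 1)) * M₀ (j + 1) j := by
      rw [hCij]; ring
    have hM : M₀ (j + 1) j ≠ 0 := by
      rw [hM₀]
      simp only [if_pos rfl]
      by_cases h : j + 1 = j - 1
      · rw [if_pos h]; norm_num
      · rw [if_neg h]; norm_num
    have hdne : d j - d (j + 1) ≠ 0 := by
      intro h
      have : d j = d (j + 1) := sub_eq_zero.mp h
      have := hdinj this
      exact hone (by linear_combination -this)
    have hCne : C (j + 1) j ≠ 0 := by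
      rw [hC1]; exact mul_ne_zero hdne hM
    have : C (j + 1) j * (X (j + 1) (j + 1) - X j j) = 0 := by linear_combination this
    rcases mul_eq_zero.mp this with h | h
    · exact absurd h hCne
    · exact sub_eq_zero.mp h
  -- all diagonal entries equal
  have hall : ∀ h : ZMod m, X h h = X 0 0 := by
    have hnat : ∀ n : ℕ, X (n : ZMod m) (n : ZMod m) = X 0 0 := by
      intro n
      induction n with
      | zero => simp
      | succ n ih => push_cast; rw [hstep]; exact ih
    intro h
    have : ((h.val : ℕ) : ZMod m) = h := by rw [ZMod.natCast_val, ZMod.cast_id]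
    rw [← this]; exact hnat h.val
  refine ⟨X 0 0, ?_⟩
  ext i j
  by_cases hij : i = j
  · subst hij
    simp [Matrix.one_apply, hall i]
  · simp [Matrix.one_apply, hij, hXoff i j hij]
end
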